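/- Let N ≥ 1 be an integer, 1 < p < q, and let v be a radial Neumann solution with exponent q. Then the energy E_q(v) := ∫_0^1 r^{N−1}( v'(r)^p/p + v(r)^p/p − v(r)^q/q ) dr satisfies E_q(v) ≤ (1/p)·∫_0^1 r^{N−1}( v'(r)^p + v(r)^p ) dr ≤ (1/(pN))·(q/p)^{p/(q−p)}. -/

import Mathlib

open Real Set Filter intervalIntegral

/-- `v : [0,1] → ℝ` is a radial Neumann solution with exponent `q` of
`-Δ_p v + v^{p-1} = v^{q-1}` in the unit ball of `ℝ^N`, in the cone of positive,
radially nondecreasing functions; `v'` is its derivative on `[0,1]`. -/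
def IsRadialNeumannSol (N : ℕ) (p q : ℝ) (v v' : ℝ → ℝ) : Prop :=
  (∀ r ∈ Set.Icc (0:ℝ) 1, HasDerivWithinAt v (v' r) (Set.Icc (0:ℝ) 1) r) ∧
  ContinuousOn v' (Set.Icc (0:ℝ) 1) ∧
  (∀ r ∈ Set.Icc (0:ℝ) 1, 0 < v r) ∧
  MonotoneOn v (Set.Icc (0:ℝ) 1) ∧
  (∀ r ∈ Set.Icc (0:ℝ) 1, 0 ≤ v' r) ∧
  v' 0 = 0 ∧ v' 1 = 0 ∧
  (∀ r ∈ Set.Ioo (0:ℝ) 1,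
    HasDerivAt (fun s => s ^ (N - 1) * v' s ^ (p - 1))
      (r ^ (N - 1) * (v r ^ (p - 1) - v r ^ (q - 1))) r)

/-!
Testing the equation against `1` balances `∫ r^{N-1} v^{p-1}` and `∫ r^{N-1} v^{q-1}`, which for a
nondecreasing `v` forces `v 0 ≤ 1`. The Hamiltonian `(p-1)/p v'^p + v^q/q - v^p/p` is nonincreasing
along the radial equation and `v'` vanishes at both ends, so `H(1) ≤ H(0) ≤ 0`, which bounds
`v ≤ v 1 ≤ M := (q/p)^{1/(q-p)}`. Testing against `v` turns `∫ r^{N-1}(v'^p + v^p)` into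
`∫ r^{N-1} v^q ≤ M ∫ r^{N-1} v^{q-1} = M ∫ r^{N-1} v^{p-1} ≤ M^p / N`.
-/

open MeasureTheory

lemma rpow_sub_one_mul_self {x a : ℝ} (h : x ≠ 0 ∨ a ≠ 0) : x ^ (a - 1) * x = x ^ a := by
  rcases eq_or_ne x 0 with rfl | hx
  · rw [mul_zero, Real.zero_rpow (h.resolve_left (not_not.2 rfl))]
  · rw [Real.rpow_sub_one hx, div_mul_cancel₀ _ hx]

lemma rpow_div_le_rpow_div_of_le_one {x p q : ℝ} (hx₀ : 0 < x) (hx₁ : x ≤ 1) (hp : 0 < p)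
    (hpq : p ≤ q) : x ^ q / q ≤ x ^ p / p :=
  have hxpq : x ^ q ≤ x ^ p := Real.rpow_le_rpow_of_exponent_ge hx₀ hx₁ hpq
  calc x ^ q / q ≤ x ^ p / q := by gcongr; linarith
    _ ≤ x ^ p / p := by gcongr

lemma le_rpow_inv_of_rpow_div_le {x p q : ℝ} (hx : 0 < x) (hp : 0 < p) (hpq : p < q)
    (h : x ^ q / q ≤ x ^ p / p) : x ≤ (q / p) ^ (q - p)⁻¹ := by
  have hxp : 0 < x ^ p := Real.rpow_pos_of_pos hx p
  rw [Real.le_rpow_inv_iff_of_pos hx.le (div_pos (by linarith) hp).le (by linarith),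
    Real.rpow_sub hx, div_le_div_iff₀ hxp hp]
  rw [div_le_div_iff₀ (by linarith) hp] at h
  linarith

lemma intervalIntegrable_pow_mul (k : ℕ) {f : ℝ → ℝ} (hf : ContinuousOn f (Icc 0 1)) :
    IntervalIntegrable (fun r => r ^ k * f r) volume 0 1 :=
  ((continuous_pow k).continuousOn.mul hf).intervalIntegrable_of_Icc zero_le_one

lemma integral_pow_sub_one {N : ℕ} (hN : 1 ≤ N) : ∫ r in (0 : ℝ)..1, r ^ (N - 1) = 1 / N := by
  rw [integral_pow, Nat.sub_add_cancel hN, one_pow, zero_pow (by omega), Nat.cast_sub hN]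
  simp

/-- Conserved along the radial equation when `N = 1`; the friction term `(N-1)/r` makes it
nonincreasing in general. -/
noncomputable def radialHamiltonian (p q : ℝ) (v v' : ℝ → ℝ) (r : ℝ) : ℝ :=
  (p - 1) / p * v' r ^ p + v r ^ q / q - v r ^ p / p

namespace IsRadialNeumannSol

variable {N : ℕ} {p q : ℝ} {v v' : ℝ → ℝ}

lemma pos (h : IsRadialNeumannSol N p q v v') {r : ℝ} (hr : r ∈ Icc 0 1) : 0 < v r :=
  h.2.2.1 r hr

lemma monotoneOn (h : IsRadialNeumannSol N p q v v') : MonotoneOn v (Icc 0 1) :=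
  h.2.2.2.1

lemma deriv_nonneg (h : IsRadialNeumannSol N p q v v') {r : ℝ} (hr : r ∈ Icc 0 1) : 0 ≤ v' r :=
  h.2.2.2.2.1 r hr

lemma deriv_apply_zero (h : IsRadialNeumannSol N p q v v') : v' 0 = 0 :=
  h.2.2.2.2.2.1

lemma deriv_apply_one (h : IsRadialNeumannSol N p q v v') : v' 1 = 0 :=
  h.2.2.2.2.2.2.1

lemma hasDerivAt_flux (h : IsRadialNeumannSol N p q v v') {r : ℝ} (hr : r ∈ Ioo 0 1) :
    HasDerivAt (fun s => s ^ (N - 1) * v' s ^ (p - 1))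
      (r ^ (N - 1) * (v r ^ (p - 1) - v r ^ (q - 1))) r :=
  h.2.2.2.2.2.2.2 r hr

lemma continuousOn (h : IsRadialNeumannSol N p q v v') : ContinuousOn v (Icc 0 1) :=
  fun r hr => (h.1 r hr).continuousWithinAt

lemma continuousOn_rpow (h : IsRadialNeumannSol N p q v v') (a : ℝ) :
    ContinuousOn (fun r => v r ^ a) (Icc 0 1) :=
  h.continuousOn.rpow_const fun _ hr => Or.inl (h.pos hr).ne'

lemma continuousOn_deriv_rpow (h : IsRadialNeumannSol N p q v v') {a : ℝ} (ha : 0 ≤ a) :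
    ContinuousOn (fun r => v' r ^ a) (Icc 0 1) :=
  h.2.1.rpow_const fun _ _ => Or.inr ha

lemma hasDerivAt (h : IsRadialNeumannSol N p q v v') {r : ℝ} (hr : r ∈ Ioo 0 1) :
    HasDerivAt v (v' r) r :=
  (h.1 r (Ioo_subset_Icc_self hr)).hasDerivAt (Icc_mem_nhds hr.1 hr.2)

lemma continuousOn_flux (h : IsRadialNeumannSol N p q v v') (hp : 1 < p) :
    ContinuousOn (fun r => r ^ (N - 1) * v' r ^ (p - 1)) (Icc 0 1) :=
  (continuous_pow _).continuousOn.mul (h.continuousOn_deriv_rpow (by linarith))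

lemma flux_zero (h : IsRadialNeumannSol N p q v v') (hp : 1 < p) :
    (0 : ℝ) ^ (N - 1) * v' 0 ^ (p - 1) = 0 := by
  rw [h.deriv_apply_zero, Real.zero_rpow (by linarith), mul_zero]

lemma flux_one (h : IsRadialNeumannSol N p q v v') (hp : 1 < p) :
    (1 : ℝ) ^ (N - 1) * v' 1 ^ (p - 1) = 0 := by
  rw [h.deriv_apply_one, Real.zero_rpow (by linarith), mul_zero]

lemma integral_rpow_sub_one_sub_rpow_sub_one_eq_zero (h : IsRadialNeumannSol N p q v v')
    (hp : 1 < p) :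
    ∫ r in (0 : ℝ)..1, r ^ (N - 1) * (v r ^ (p - 1) - v r ^ (q - 1)) = 0 := by
  rw [integral_eq_sub_of_hasDerivAt_of_le zero_le_one (h.continuousOn_flux hp)
    (fun r hr => h.hasDerivAt_flux hr)
    (intervalIntegrable_pow_mul _ ((h.continuousOn_rpow _).sub (h.continuousOn_rpow _))),
    h.flux_zero hp, h.flux_one hp, sub_zero]

lemma apply_zero_le_one (h : IsRadialNeumannSol N p q v v') (hp : 1 < p) (hpq : p < q) :
    v 0 ≤ 1 := by
  by_contra! hv0
  have hneg : ∀ r ∈ Ioo (0 : ℝ) 1, r ^ (N - 1) * (v r ^ (p - 1) - v r ^ (q - 1)) < 0 := by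
    intro r hr
    have hvr : 1 < v r := hv0.trans_le (h.monotoneOn (left_mem_Icc.2 zero_le_one)
      (Ioo_subset_Icc_self hr) hr.1.le)
    exact mul_neg_of_pos_of_neg (pow_pos hr.1 _)
      (sub_neg.2 (Real.rpow_lt_rpow_of_exponent_lt hvr (by linarith)))
  have hpos : 0 < ∫ r in (0 : ℝ)..1, -(r ^ (N - 1) * (v r ^ (p - 1) - v r ^ (q - 1))) :=
    intervalIntegral_pos_of_pos_on
    (intervalIntegrable_pow_mul (N - 1) ((h.continuousOn_rpow _).sub (h.continuousOn_rpow _))).neg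
    (fun r hr => neg_pos.2 (hneg r hr)) zero_lt_one
  rw [intervalIntegral.integral_neg, h.integral_rpow_sub_one_sub_rpow_sub_one_eq_zero hp,
    neg_zero] at hpos
  exact hpos.false

/-- The truncated exponent `N - 1 - 1` is harmless: its coefficient `N - 1` vanishes whenever it
truncates. -/
lemma hasDerivAt_deriv_rpow_sub_one (h : IsRadialNeumannSol N p q v v') {r : ℝ}
    (hr : r ∈ Ioo 0 1) :
    HasDerivAt (fun s => v' s ^ (p - 1))
      (v r ^ (p - 1) - v r ^ (q - 1) - (N - 1 : ℕ) * r ^ (N - 1 - 1) * v' r ^ (p - 1) / r ^ (N - 1))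
      r := by
  have hrN : r ^ (N - 1) ≠ 0 := pow_ne_zero _ hr.1.ne'
  have hquot := (h.hasDerivAt_flux hr).div (hasDerivAt_pow (N - 1) r) hrN
  have hcongr : (fun s => v' s ^ (p - 1)) =ᶠ[nhds r]
      fun s => s ^ (N - 1) * v' s ^ (p - 1) / s ^ (N - 1) := by
    filter_upwards [Ioi_mem_nhds hr.1] with s hs
    rw [mul_div_cancel_left₀ _ (pow_ne_zero _ (ne_of_gt hs))]
  refine (hquot.congr_of_eventuallyEq hcongr).congr_deriv ?_
  field_simp

lemma hasDerivAt_deriv_rpow (h : IsRadialNeumannSol N p q v v') (hp : 1 < p) {r : ℝ}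
    (hr : r ∈ Ioo 0 1) :
    HasDerivAt (fun s => v' s ^ p) (p / (p - 1) * v' r * (v r ^ (p - 1) - v r ^ (q - 1) -
      (N - 1 : ℕ) * r ^ (N - 1 - 1) * v' r ^ (p - 1) / r ^ (N - 1))) r := by
  have hp₁ : p - 1 ≠ 0 := by linarith
  have hv'r : 0 ≤ v' r := h.deriv_nonneg (Ioo_subset_Icc_self hr)
  have hcomp := (h.hasDerivAt_deriv_rpow_sub_one hr).rpow_const (p := p / (p - 1))
    (Or.inr ((le_div_iff₀ (by linarith)).2 (by linarith)))
  have hcongr : (fun s => v' s ^ p) =ᶠ[nhds r] fun s => (v' s ^ (p - 1)) ^ (p / (p - 1)) := by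
    filter_upwards [Ioo_mem_nhds hr.1 hr.2] with s hs
    rw [← Real.rpow_mul (h.deriv_nonneg (Ioo_subset_Icc_self hs)), mul_div_cancel₀ _ hp₁]
  refine (hcomp.congr_of_eventuallyEq hcongr).congr_deriv ?_
  rw [← Real.rpow_mul hv'r, mul_sub_one, mul_div_cancel₀ _ hp₁, sub_sub_cancel, Real.rpow_one]
  ring

lemma hasDerivAt_radialHamiltonian (h : IsRadialNeumannSol N p q v v') (hp : 1 < p) (hq : q ≠ 0)
    {r : ℝ} (hr : r ∈ Ioo 0 1) :
    HasDerivAt (radialHamiltonian p q v v')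
      (-((N - 1 : ℕ) * r ^ (N - 1 - 1) * v' r ^ p / r ^ (N - 1))) r := by
  have hvr : v r ≠ 0 := (h.pos (Ioo_subset_Icc_self hr)).ne'
  have hv : HasDerivAt (fun s => v s ^ q / q - v s ^ p / p)
      (v' r * q * v r ^ (q - 1) / q - v' r * p * v r ^ (p - 1) / p) r :=
    (((h.hasDerivAt hr).rpow_const (Or.inl hvr)).div_const q).sub
      (((h.hasDerivAt hr).rpow_const (Or.inl hvr)).div_const p)
  have hsplit : radialHamiltonian p q v v' =
      fun s => (p - 1) / p * v' s ^ p + (v s ^ q / q - v s ^ p / p) := by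
    funext s
    simp only [radialHamiltonian]
    ring
  rw [hsplit]
  refine (((h.hasDerivAt_deriv_rpow hp hr).const_mul ((p - 1) / p)).add hv).congr_deriv ?_
  rw [← rpow_sub_one_mul_self (.inr (by linarith) : v' r ≠ 0 ∨ p ≠ 0)]
  have hp₁ : p - 1 ≠ 0 := by linarith
  field_simp
  ring

lemma antitoneOn_radialHamiltonian (h : IsRadialNeumannSol N p q v v') (hp : 1 < p)
    (hq : q ≠ 0) : AntitoneOn (radialHamiltonian p q v v') (Icc 0 1) := by
  refine antitoneOn_of_hasDerivWithinAt_nonpos (convex_Icc 0 1)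
    (f' := fun r => -((N - 1 : ℕ) * r ^ (N - 1 - 1) * v' r ^ p / r ^ (N - 1))) ?_
    (fun r hr => ?_) fun r hr => ?_
  · exact (((h.continuousOn_deriv_rpow (by linarith)).const_smul ((p - 1) / p)).add
      ((h.continuousOn_rpow q).div_const q)).sub ((h.continuousOn_rpow p).div_const p)
  · rw [interior_Icc] at hr ⊢
    exact (h.hasDerivAt_radialHamiltonian hp hq hr).hasDerivWithinAt
  · rw [interior_Icc] at hr
    have hv'p : 0 ≤ v' r ^ p := Real.rpow_nonneg (h.deriv_nonneg (Ioo_subset_Icc_self hr)) p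
    have hr₀ : 0 < r := hr.1
    exact neg_nonpos.2 (by positivity)

lemma apply_one_le (h : IsRadialNeumannSol N p q v v') (hp : 1 < p) (hpq : p < q) :
    v 1 ≤ (q / p) ^ (q - p)⁻¹ := by
  have hp₀ : p ≠ 0 := by linarith
  have hv₀ : 0 < v 0 := h.pos (left_mem_Icc.2 zero_le_one)
  have hv₁ : 0 < v 1 := h.pos (right_mem_Icc.2 zero_le_one)
  have hH := h.antitoneOn_radialHamiltonian hp (by linarith) (left_mem_Icc.2 zero_le_one)
    (right_mem_Icc.2 zero_le_one) zero_le_one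
  simp only [radialHamiltonian, h.deriv_apply_zero, h.deriv_apply_one, Real.zero_rpow hp₀, mul_zero,
    zero_add] at hH
  have hH₀ := rpow_div_le_rpow_div_of_le_one hv₀ (h.apply_zero_le_one hp hpq) (by linarith) hpq.le
  exact le_rpow_inv_of_rpow_div_le hv₁ (by linarith) hpq (by linarith)

lemma apply_le (h : IsRadialNeumannSol N p q v v') (hp : 1 < p) (hpq : p < q) {r : ℝ}
    (hr : r ∈ Icc 0 1) : v r ≤ (q / p) ^ (q - p)⁻¹ :=
  (h.monotoneOn hr (right_mem_Icc.2 zero_le_one) hr.2).trans (h.apply_one_le hp hpq)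

lemma integral_rpow_sub_one_eq (h : IsRadialNeumannSol N p q v v') (hp : 1 < p) :
    ∫ r in (0 : ℝ)..1, r ^ (N - 1) * v r ^ (q - 1) =
      ∫ r in (0 : ℝ)..1, r ^ (N - 1) * v r ^ (p - 1) := by
  have h₀ := h.integral_rpow_sub_one_sub_rpow_sub_one_eq_zero hp
  simp_rw [mul_sub] at h₀
  rw [intervalIntegral.integral_sub (intervalIntegrable_pow_mul _ (h.continuousOn_rpow _))
    (intervalIntegrable_pow_mul _ (h.continuousOn_rpow _)), sub_eq_zero] at h₀
  exact h₀.symm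

lemma integral_deriv_rpow_add_rpow (h : IsRadialNeumannSol N p q v v') (hp : 1 < p) :
    ∫ r in (0 : ℝ)..1, r ^ (N - 1) * (v' r ^ p + v r ^ p) =
      ∫ r in (0 : ℝ)..1, r ^ (N - 1) * v r ^ q := by
  have hp₀ : p ≠ 0 := by linarith
  have hint₁ : IntervalIntegrable (fun r => r ^ (N - 1) * (v' r ^ p + v r ^ p)) volume 0 1 :=
    intervalIntegrable_pow_mul (N - 1)
    ((h.continuousOn_deriv_rpow (by linarith : 0 ≤ p)).add (h.continuousOn_rpow p))
  have hint₂ := intervalIntegrable_pow_mul (N - 1) (h.continuousOn_rpow q)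
  have hderiv : ∀ r ∈ Ioo (0 : ℝ) 1, HasDerivAt (fun s => s ^ (N - 1) * v' s ^ (p - 1) * v s)
      (r ^ (N - 1) * (v' r ^ p + v r ^ p) - r ^ (N - 1) * v r ^ q) r := by
    intro r hr
    refine ((h.hasDerivAt_flux hr).mul (h.hasDerivAt hr)).congr_deriv ?_
    have hv : v r ≠ 0 := (h.pos (Ioo_subset_Icc_self hr)).ne'
    rw [← rpow_sub_one_mul_self (.inl hv : v r ≠ 0 ∨ p ≠ 0),
      ← rpow_sub_one_mul_self (.inl hv : v r ≠ 0 ∨ q ≠ 0),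
      ← rpow_sub_one_mul_self (.inr hp₀ : v' r ≠ 0 ∨ p ≠ 0)]
    ring
  have hF := integral_eq_sub_of_hasDerivAt_of_le zero_le_one
    ((h.continuousOn_flux hp).mul h.continuousOn) hderiv (hint₁.sub hint₂)
  simp only [Pi.mul_apply, h.flux_zero hp, h.flux_one hp, zero_mul, sub_zero] at hF
  rwa [intervalIntegral.integral_sub hint₁ hint₂, sub_eq_zero] at hF

lemma integral_rpow_le (h : IsRadialNeumannSol N p q v v') (hN : 1 ≤ N) (hp : 1 < p)
    (hpq : p < q) :
    ∫ r in (0 : ℝ)..1, r ^ (N - 1) * v r ^ q ≤ (q / p) ^ (p / (q - p)) / N := by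
  set M := (q / p) ^ (q - p)⁻¹ with hM
  have hqp : 0 ≤ q / p := (div_pos (by linarith) (by linarith)).le
  have hM₀ : 0 ≤ M := Real.rpow_nonneg hqp _
  have hint : ∀ a : ℝ, IntervalIntegrable (fun r => r ^ (N - 1) * v r ^ a) volume 0 1 :=
    fun a => intervalIntegrable_pow_mul (N - 1) (h.continuousOn_rpow a)
  calc ∫ r in (0 : ℝ)..1, r ^ (N - 1) * v r ^ q
      ≤ ∫ r in (0 : ℝ)..1, M * (r ^ (N - 1) * v r ^ (q - 1)) := by
        refine intervalIntegral.integral_mono_on zero_le_one (hint q) ((hint _).const_mul M)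
          fun r hr => ?_
        have hv := h.pos hr
        calc r ^ (N - 1) * v r ^ q = r ^ (N - 1) * v r ^ (q - 1) * v r := by
              rw [mul_assoc, rpow_sub_one_mul_self (.inl hv.ne')]
          _ ≤ r ^ (N - 1) * v r ^ (q - 1) * M := mul_le_mul_of_nonneg_left (h.apply_le hp hpq hr)
              (mul_nonneg (pow_nonneg hr.1 _) (Real.rpow_nonneg hv.le _))
          _ = M * (r ^ (N - 1) * v r ^ (q - 1)) := mul_comm _ _
    _ = M * ∫ r in (0 : ℝ)..1, r ^ (N - 1) * v r ^ (p - 1) := by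
        rw [intervalIntegral.integral_const_mul, h.integral_rpow_sub_one_eq hp]
    _ ≤ M * ∫ r in (0 : ℝ)..1, M ^ (p - 1) * r ^ (N - 1) := by
        refine mul_le_mul_of_nonneg_left (intervalIntegral.integral_mono_on zero_le_one (hint _)
          ((continuous_pow _).intervalIntegrable _ _ |>.const_mul _) fun r hr => ?_) hM₀
        rw [mul_comm (M ^ (p - 1))]
        exact mul_le_mul_of_nonneg_left (Real.rpow_le_rpow (h.pos hr).le (h.apply_le hp hpq hr)
          (by linarith : 0 ≤ p - 1)) (pow_nonneg hr.1 _)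
    _ = M ^ p / N := by
        rw [intervalIntegral.integral_const_mul, integral_pow_sub_one hN, ← mul_assoc, mul_comm M,
          rpow_sub_one_mul_self (.inr (by linarith)), mul_one_div]
    _ = (q / p) ^ (p / (q - p)) / N := by
        rw [hM, ← Real.rpow_mul hqp, inv_mul_eq_div]

lemma integral_energy_le (h : IsRadialNeumannSol N p q v v') (hp : 0 ≤ p) (hq : 0 ≤ q) :
    ∫ r in (0 : ℝ)..1, r ^ (N - 1) * (v' r ^ p / p + v r ^ p / p - v r ^ q / q) ≤
      1 / p * ∫ r in (0 : ℝ)..1, r ^ (N - 1) * (v' r ^ p + v r ^ p) := by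
  rw [← intervalIntegral.integral_const_mul]
  refine intervalIntegral.integral_mono_on zero_le_one
    (intervalIntegrable_pow_mul _ ((((h.continuousOn_deriv_rpow hp).div_const p).add
      ((h.continuousOn_rpow p).div_const p)).sub ((h.continuousOn_rpow q).div_const q)))
    ((intervalIntegrable_pow_mul _
      ((h.continuousOn_deriv_rpow hp).add (h.continuousOn_rpow p))).const_mul _) fun r hr => ?_
  have hvq : 0 ≤ r ^ (N - 1) * (v r ^ q / q) :=
    mul_nonneg (pow_nonneg hr.1 _) (div_nonneg (Real.rpow_nonneg (h.pos hr).le _) hq)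
  have hsplit : r ^ (N - 1) * (v' r ^ p / p + v r ^ p / p - v r ^ q / q) =
      1 / p * (r ^ (N - 1) * (v' r ^ p + v r ^ p)) - r ^ (N - 1) * (v r ^ q / q) := by
    ring
  linarith

end IsRadialNeumannSol

/-- Improved energy estimate: for a radial Neumann solution `v`,
`E_q(v) ≤ (1/p)∫₀¹ r^{N-1}(v'^p + v^p) dr ≤ (1/(pN))·(q/p)^{p/(q-p)}`. -/
theorem improved_energy_estimate
    (N : ℕ) (hN : 1 ≤ N) (p q : ℝ) (hp : 1 < p) (hpq : p < q)
    (v v' : ℝ → ℝ) (hsol : IsRadialNeumannSol N p q v v') :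
    (∫ r in (0:ℝ)..1, r ^ (N - 1) * (v' r ^ p / p + v r ^ p / p - v r ^ q / q)) ≤
      (1 / p) * ∫ r in (0:ℝ)..1, r ^ (N - 1) * (v' r ^ p + v r ^ p) ∧
    (1 / p) * (∫ r in (0:ℝ)..1, r ^ (N - 1) * (v' r ^ p + v r ^ p)) ≤
      (1 / (p * (N : ℝ))) * (q / p) ^ (p / (q - p)) := by
  refine ⟨hsol.integral_energy_le (by linarith) (by linarith), ?_⟩
  rw [hsol.integral_deriv_rpow_add_rpow hp]
  calc 1 / p * ∫ r in (0 : ℝ)..1, r ^ (N - 1) * v r ^ q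
      ≤ 1 / p * ((q / p) ^ (p / (q - p)) / N) :=
        mul_le_mul_of_nonneg_left (hsol.integral_rpow_le hN hp hpq) (by positivity)
    _ = 1 / (p * N) * (q / p) ^ (p / (q - p)) := by ring
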